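/- arXiv:math/0606419 — 3 statements merged into one kernel-verified Lean document; each statement's English description precedes it below -/
import Mathlib

section
/- Differential simplicity passes to primitive extensions: let R be a differentially simple k-algebra (char 0) with commuting derivations ∂₁,…,∂_ℓ and constants k, and let r₁,…,r_ℓ ∈ R satisfy ∂ᵢ r_j = ∂_j rᵢ for all i, j. Extend the derivations to the polynomial ring R[y] by ∂ᵢ y = rᵢ. If no element u ∈ R satisfies ∂ᵢ u = rᵢ for all i, then R[y] has no nontrivial differential ideals (is differentially simple). -/
open Polynomial

lemma aux_coeff_D' {k R : Type*} [Field k] [CommRing R] [Algebra k R]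
    (D : Derivation k R R) (ri : R) (D' : Derivation k (Polynomial R) (Polynomial R))
    (hC : ∀ a, D' (C a) = C (D a)) (hX : D' X = C ri)
    (q : Polynomial R) (m : ℕ) :
    (D' q).coeff m = D (q.coeff m) + ((m : R) + 1) * ri * q.coeff (m + 1) := by
  induction q using Polynomial.induction_on' with
  | add p q hp hq => simp [map_add, hp, hq]; ring
  | monomial kk a =>
    rcases kk with _ | kk
    · simp [Polynomial.monomial_zero_left, hC, Polynomial.coeff_C]
      rcases m with _ | m <;> simp
    · have key : D' (Polynomial.monomial (kk+1) a) =
          C (D a) * X ^ (kk+1) + (kk+1) • (C (a * ri) * X ^ kk) := by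
        rw [← Polynomial.C_mul_X_pow_eq_monomial, Derivation.leibniz, hC,
          Derivation.leibniz_pow, hX]
        simp only [smul_eq_mul, Nat.add_sub_cancel, map_mul, nsmul_eq_mul]
        push_cast
        ring
      rw [key]
      simp only [Polynomial.coeff_add, Polynomial.coeff_smul, Polynomial.coeff_C_mul,
        Polynomial.coeff_X_pow, Polynomial.coeff_monomial, smul_eq_mul, mul_ite, mul_one,
        mul_zero]
      split_ifs
      all_goals try omega
      all_goals try simp only [map_zero, nsmul_eq_mul, mul_zero, zero_add, add_zero]
      all_goals try push_cast
      all_goals try ring1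
      all_goals (have hmk : m = kk := (by omega); rw [hmk]; try push_cast; try ring1)

/-- Differential simplicity passes to primitive extensions: if `R` is
differentially simple with commuting derivations `∂᷀ᵢ` and constants `k`, and
the derivations are extended to `R[y]` by `∂ᵢ y = rᵢ` where `∂ᵢ r_j = ∂_j rᵢ`,
and no `u ∈ R` satisfies `∂ᵢ u = rᵢ` for all `i`, then `R[y]` is
differentially simple. -/
theorem polynomial_ext_differentially_simple {k R : Type*} [Field k] [CharZero k]
    [CommRing R] [Algebra k R] (ℓ : ℕ) (D : Fin ℓ → Derivation k R R)
    (hcomm : ∀ i j, ∀ x : R, D i (D j x) = D j (D i x))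
    (hsimple : ∀ I : Ideal R, (∀ i, ∀ x ∈ I, D i x ∈ I) → I = ⊥ ∨ I = ⊤)
    (hconst : ∀ r : R, (∀ i, D i r = 0) → ∃ c : k, algebraMap k R c = r)
    (r : Fin ℓ → R) (hsym : ∀ i j, D i (r j) = D j (r i))
    (D' : Fin ℓ → Derivation k (Polynomial R) (Polynomial R))
    (hD'C : ∀ i a, D' i (Polynomial.C a) = Polynomial.C (D i a))
    (hD'X : ∀ i, D' i Polynomial.X = Polynomial.C (r i))
    (hnoprim : ¬ ∃ u : R, ∀ i, D i u = r i) :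
    ∀ I : Ideal (Polynomial R), (∀ i, ∀ x ∈ I, D' i x ∈ I) → I = ⊥ ∨ I = ⊤ := by
  classical
  intro I hI
  by_cases hIbot : I = ⊥
  · exact Or.inl hIbot
  right
  rw [Ideal.eq_top_iff_one]
  obtain ⟨p0, hp0I, hp0ne⟩ := (Submodule.ne_bot_iff I).mp hIbot
  -- R is nontrivial
  haveI : Nontrivial R := by
    by_contra htriv
    rw [not_nontrivial_iff_subsingleton] at htriv
    exact hp0ne (Subsingleton.elim _ _)
  have hex : ∃ n, ∃ p, p ∈ I ∧ p ≠ 0 ∧ p.natDegree = n :=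
    ⟨p0.natDegree, p0, hp0I, hp0ne, rfl⟩
  set n := Nat.find hex with hndef
  obtain ⟨p, hpI, hpne, hpdeg⟩ := Nat.find_spec hex
  have hmin : ∀ q, q ∈ I → q ≠ 0 → n ≤ q.natDegree := by
    intro q hq hqne
    by_contra hlt
    push_neg at hlt
    exact Nat.find_min hex hlt ⟨q, hq, hqne, rfl⟩
  -- the ideal of n-th coefficients
  let J : Ideal R :=
    { carrier := {a | ∃ q, q ∈ I ∧ (∀ j, n < j → q.coeff j = 0) ∧ q.coeff n = a}
      add_mem' := by
        rintro a b ⟨q1, h1, h1z, rfl⟩ ⟨q2, h2, h2z, rfl⟩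
        exact ⟨q1 + q2, I.add_mem h1 h2,
          fun j hj => by simp [h1z j hj, h2z j hj], by simp⟩
      zero_mem' := ⟨0, I.zero_mem, by simp, by simp⟩
      smul_mem' := by
        rintro c a ⟨q, hq, hz, rfl⟩
        refine ⟨Polynomial.C c * q, I.mul_mem_left _ hq,
          fun j hj => by simp [hz j hj], ?_⟩
        simp [Polynomial.coeff_C_mul] }
  have hmemJ : ∀ a : R, a ∈ J ↔
      ∃ q, q ∈ I ∧ (∀ j, n < j → q.coeff j = 0) ∧ q.coeff n = a := fun a => Iff.rfl
  have hJd : ∀ i, ∀ a ∈ J, D i a ∈ J := by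
    intro i a ha
    obtain ⟨q, hq, hz, rfl⟩ := (hmemJ a).mp ha
    refine (hmemJ _).mpr ⟨D' i q, hI i q hq, ?_, ?_⟩
    · intro j hj
      rw [aux_coeff_D' (D i) (r i) (D' i) (hD'C i) (hD'X i)]
      rw [hz j hj, hz (j+1) (by omega), map_zero]
      ring
    · rw [aux_coeff_D' (D i) (r i) (D' i) (hD'C i) (hD'X i)]
      rw [hz (n+1) (by omega)]
      ring
  have hpcJ : p.coeff n ∈ J := (hmemJ _).mpr
    ⟨p, hpI, fun j hj => Polynomial.coeff_eq_zero_of_natDegree_lt (by omega), rfl⟩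
  have hpc : p.coeff n ≠ 0 := by
    have := Polynomial.leadingCoeff_ne_zero.mpr hpne
    rwa [Polynomial.leadingCoeff, hpdeg] at this
  have hJtop : J = ⊤ := by
    rcases hsimple J hJd with h | h
    · exact absurd ((Submodule.eq_bot_iff J).mp h _ hpcJ) hpc
    · exact h
  have h1J : (1 : R) ∈ J := by rw [hJtop]; trivial
  obtain ⟨q, hqI, hqz, hq1⟩ := (hmemJ 1).mp h1J
  rcases Nat.eq_zero_or_pos n with hn0 | hnpos
  · -- q = 1
    rw [hn0] at hq1 hqz
    have hq : q = 1 := by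
      ext j
      rcases Nat.eq_zero_or_pos j with hj0 | hjpos
      · subst hj0; simp [hq1, Polynomial.coeff_one]
      · rw [hqz j (by omega), Polynomial.coeff_one]
        simp [Nat.pos_iff_ne_zero.mp hjpos]
    rwa [hq] at hqI
  · -- contradiction with hnoprim
    exfalso
    have hqne : q ≠ 0 := by
      intro h
      rw [h] at hq1
      simp at hq1
    have hdq : ∀ i, D' i q = 0 := by
      intro i
      by_contra hne
      have hc : ∀ j : ℕ, n ≤ j → (D' i q).coeff j = 0 := by
        intro j hj
        rw [aux_coeff_D' (D i) (r i) (D' i) (hD'C i) (hD'X i)]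
        rw [hqz (j+1) (by omega)]
        rcases eq_or_lt_of_le hj with hjn | hjn
        · rw [← hjn, hq1, Derivation.map_one_eq_zero]; ring
        · rw [hqz j hjn, map_zero]; ring
      have hdeg : (D' i q).natDegree < n := by
        rw [Polynomial.natDegree_lt_iff_degree_lt hne]
        rw [Polynomial.degree_lt_iff_coeff_zero]
        intro m hm
        exact hc m (by exact_mod_cast hm)
      exact absurd (hmin _ (hI i q hqI) hne) (by omega)
    -- extract the primitive
    have hkey : ∀ i, D i (q.coeff (n-1)) = -((n : R) * r i) := by
      intro i
      have h0 : (D' i q).coeff (n-1) = 0 := by rw [hdq i]; simp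
      rw [aux_coeff_D' (D i) (r i) (D' i) (hD'C i) (hD'X i)] at h0
      rw [Nat.sub_add_cancel hnpos, hq1] at h0
      have hcast : ((n - 1 : ℕ) : R) + 1 = (n : R) := by
        have : (n - 1) + 1 = n := Nat.succ_pred_eq_of_pos hnpos
        exact_mod_cast congrArg (Nat.cast : ℕ → R) this
      rw [hcast] at h0
      rw [mul_one] at h0
      exact eq_neg_of_add_eq_zero_left h0
    have hkn : ((n : k)) ≠ 0 := Nat.cast_ne_zero.mpr (by omega)
    refine hnoprim ⟨(-(n : k)⁻¹) • q.coeff (n-1), fun i => ?_⟩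
    rw [Derivation.map_smul, hkey i]
    rw [neg_smul, smul_neg, neg_neg]
    rw [Algebra.smul_def, ← map_natCast (algebraMap k R) n, ← mul_assoc, ← map_mul,
      inv_mul_cancel₀ hkn, map_one, one_mul]
end

section
/- The ring of regular functions on the complement of an affine hyperplane arrangement is differentially simple: for k a field of characteristic 0, the algebra O_M = k[x₁,…,x_ℓ, α₁⁻¹,…,α_N⁻¹] (αᵢ nonzero linear polynomials) with derivations ∂/∂x₁,…,∂/∂x_ℓ has no nonzero proper differential ideals. -/
/-!
Every nonzero polynomial can be differentiated down to a nonzero constant, since in characteristic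
zero a partial derivative lowers the total degree without killing a nonconstant polynomial. Hence
an ideal of `k[x₁,…,x_ℓ]` stable under the partial derivatives is `⊥` or `⊤`. A differential ideal
of a localization contracts to such an ideal and is recovered from its contraction.
-/

namespace MvPolynomial

variable {R σ : Type*}

theorem totalDegree_pderiv_lt [CommSemiring R] {p : MvPolynomial σ R} (hp : p.totalDegree ≠ 0)
    (i : σ) : (pderiv i p).totalDegree < p.totalDegree := by
  refine (Finset.sup_lt_iff (Nat.pos_of_ne_zero hp)).mpr fun m hm => ?_
  have hmi : m + Finsupp.single i 1 ∈ p.support := by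
    rw [mem_support_iff, coeff_pderiv] at hm
    exact mem_support_iff.mpr (left_ne_zero_of_mul hm)
  have := le_totalDegree hmi
  rw [Finsupp.sum_add_index' (fun _ => rfl) (fun _ _ _ => rfl), Finsupp.sum_single_index rfl]
    at this
  omega

theorem exists_pderiv_ne_zero [CommSemiring R] [IsAddTorsionFree R] {p : MvPolynomial σ R}
    (hp : p.totalDegree ≠ 0) : ∃ i, pderiv i p ≠ 0 := by
  obtain ⟨m, hm, i, hi⟩ : ∃ m ∈ p.support, ∃ i, m i ≠ 0 := by
    by_contra! h
    exact hp ((totalDegree_eq_zero_iff _ p).mpr h)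
  refine ⟨i, ne_of_apply_ne (coeff (m - Finsupp.single i 1)) ?_⟩
  have hm' : m - Finsupp.single i 1 + Finsupp.single i 1 = m :=
    tsub_add_cancel_of_le (Finsupp.single_le_iff.mpr (Nat.one_le_iff_ne_zero.mpr hi))
  rw [coeff_pderiv, hm', coeff_zero, mul_comm, ← Nat.cast_succ, ← nsmul_eq_mul]
  exact smul_ne_zero (Nat.succ_ne_zero _) (mem_support_iff.mp hm)

theorem eq_top_of_pderiv_mem_of_mem [Field R] [CharZero R] {J : Ideal (MvPolynomial σ R)}
    (hJ : ∀ i, ∀ p ∈ J, pderiv i p ∈ J) {p : MvPolynomial σ R} (hpJ : p ∈ J) (hp : p ≠ 0) :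
    J = ⊤ := by
  induction hd : p.totalDegree using Nat.strong_induction_on generalizing p with
  | _ n ih =>
    subst hd
    by_cases hconst : p.totalDegree = 0
    · rw [totalDegree_eq_zero_iff_eq_C] at hconst
      rw [hconst, Ne, C_eq_zero] at hp
      exact J.eq_top_of_isUnit_mem hpJ (hconst ▸ (isUnit_iff_ne_zero.mpr hp).map C)
    · obtain ⟨i, hi⟩ := exists_pderiv_ne_zero hconst
      exact ih _ (totalDegree_pderiv_lt hconst i) (hJ i p hpJ) hi rfl

theorem ideal_eq_bot_or_eq_top_of_pderiv_mem [Field R] [CharZero R] {J : Ideal (MvPolynomial σ R)}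
    (hJ : ∀ i, ∀ p ∈ J, pderiv i p ∈ J) : J = ⊥ ∨ J = ⊤ := by
  refine or_iff_not_imp_left.mpr fun hJbot => ?_
  obtain ⟨p, hpJ, hp⟩ := Submodule.exists_mem_ne_zero_of_ne_bot hJbot
  exact eq_top_of_pderiv_mem_of_mem hJ hpJ hp

end MvPolynomial

theorem hyperplane_complement_differentially_simple_general {k : Type*} [Field k]
    [CharZero k] (ℓ : ℕ)
    (S : Submonoid (MvPolynomial (Fin ℓ) k))
    (D : Fin ℓ → Derivation k (Localization S) (Localization S))
    (hD : ∀ i p, D i (algebraMap (MvPolynomial (Fin ℓ) k) (Localization S) p) =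
      algebraMap (MvPolynomial (Fin ℓ) k) (Localization S) (MvPolynomial.pderiv i p))
    (I : Ideal (Localization S)) (hI : ∀ i, ∀ x ∈ I, D i x ∈ I) :
    I = ⊥ ∨ I = ⊤ := by
  have hstable : ∀ i, ∀ p ∈ I.under (MvPolynomial (Fin ℓ) k),
      MvPolynomial.pderiv i p ∈ I.under (MvPolynomial (Fin ℓ) k) := fun i p hp => by
    simpa only [Ideal.under, Ideal.mem_comap, ← hD] using hI i _ hp
  rw [← IsLocalization.map_under S (Localization S) I]
  rcases MvPolynomial.ideal_eq_bot_or_eq_top_of_pderiv_mem hstable with h | h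
  · exact Or.inl (h ▸ Ideal.map_bot)
  · exact Or.inr (h ▸ Ideal.map_top _)

/-- The ring of regular functions on the complement of an affine hyperplane
arrangement is differentially simple: the localization of `k[x₁,…,x_ℓ]` at the
multiplicative set generated by degree-one polynomials `α₁,…,α_N`, equipped
with the derivations extending the coordinate partial derivatives, has no
nonzero proper differential ideals. -/
theorem hyperplane_complement_differentially_simple {k : Type*} [Field k]
    [CharZero k] (ℓ N : ℕ) (α : Fin N → MvPolynomial (Fin ℓ) k)
    (hα : ∀ i, (α i).totalDegree = 1)
    (S : Submonoid (MvPolynomial (Fin ℓ) k))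
    (hS : S = Submonoid.closure (Set.range α))
    (D : Fin ℓ → Derivation k (Localization S) (Localization S))
    (hD : ∀ i p, D i (algebraMap (MvPolynomial (Fin ℓ) k) (Localization S) p) =
      algebraMap (MvPolynomial (Fin ℓ) k) (Localization S) (MvPolynomial.pderiv i p))
    (I : Ideal (Localization S)) (hI : ∀ i, ∀ x ∈ I, D i x ∈ I) :
    I = ⊥ ∨ I = ⊤ :=
  hyperplane_complement_differentially_simple_general ℓ S D hD I hI
end

section
/- In the algebra U{ε} = k[[ε]][ε⁻¹][L] of logarithmic Laurent series (with ∂L = ε⁻¹), every element has a primitive with respect to ∂ = d/dε, and the kernel of ∂ is k; i.e. H⁰(U{ε}) = k and H¹(U{ε}) = 0. -/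
/-!
Write `d = ∂_ε` on `R = k{ε}` and `ℓ = ε⁻¹`. Then `ker d = k` and `R = d R ⊕ k ℓ`: termwise
integration only fails at the residue, and residues of derivatives vanish. With `D L = ℓ`, the
coefficient of `Lⁱ` in `D u` is `d uᵢ + (i + 1) uᵢ₊₁ ℓ`. If `D u = 0` and `u` has degree `n + 1`
in `L`, its leading coefficient is some `c ∈ k` and `(n + 1) c ℓ = -d uₙ`, so `c = 0`; hence
`u ∈ ker d = k`. Conversely, for `a = d g + r ℓ`, `a Lⁿ` differs from
`D (g Lⁿ + r / (n + 1) Lⁿ⁺¹)` by `n g ℓ Lⁿ⁻¹`, and induction on `n` gives surjectivity.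
-/

namespace Derivation

open Polynomial

-- `Derivation` takes the module structure of its codomain separately from the algebra structure
-- of its domain; over `LaurentSeries k` the two are not definitionally compatible.
set_option linter.overlappingInstances false

variable {S R : Type*} [CommSemiring S] [CommRing R] [Algebra S R[X]] [Module S R[X]]
  {D : Derivation S R[X] R[X]} {d : R →+ R} {ℓ : R}

theorem polynomial_apply_C_mul_X_pow (hDC : ∀ a, D (C a) = C (d a)) (hDX : D X = C ℓ)
    (a : R) (n : ℕ) :
    D (C a * X ^ n) = C (d a) * X ^ n + n • (C (a * ℓ) * X ^ (n - 1)) := by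
  rw [leibniz, leibniz_pow, hDC, hDX, smul_eq_mul, smul_eq_mul, smul_eq_mul, C_mul]
  ring

theorem coeff_polynomial_apply (hDC : ∀ a, D (C a) = C (d a)) (hDX : D X = C ℓ)
    (u : R[X]) (i : ℕ) :
    (D u).coeff i = d (u.coeff i) + (i + 1) • (u.coeff (i + 1) * ℓ) := by
  induction u using Polynomial.induction_on' with
  | add p q hp hq =>
    rw [map_add, coeff_add, hp, hq, coeff_add, coeff_add, map_add, add_mul, smul_add]
    abel
  | monomial n a =>
    rw [← C_mul_X_pow_eq_monomial, polynomial_apply_C_mul_X_pow hDC hDX, coeff_add,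
      coeff_smul, coeff_C_mul_X_pow, coeff_C_mul_X_pow, coeff_C_mul_X_pow, coeff_C_mul_X_pow]
    rcases n with _ | n
    · simp [apply_ite d]
    · simp only [Nat.add_sub_cancel]
      split_ifs <;> first | omega | simp_all

variable {k : Type*} [Field k] [CharZero k] [Algebra k R]

theorem polynomial_exists_algebraMap_eq_of_apply_eq_zero (hDC : ∀ a, D (C a) = C (d a))
    (hDX : D X = C ℓ)
    (hker : ∀ a, d a = 0 → ∃ r : k, algebraMap k R r = a)
    (hℓ : ∀ g (r : k), d g = algebraMap k R r * ℓ → r = 0) {u : R[X]} (hu : D u = 0) :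
    ∃ r : k, algebraMap k R[X] r = u := by
  have hcoeff (i : ℕ) : d (u.coeff i) + (i + 1) • (u.coeff (i + 1) * ℓ) = 0 := by
    rw [← coeff_polynomial_apply hDC hDX, hu, coeff_zero]
  have hdeg : u.natDegree = 0 := by
    by_contra hn
    obtain ⟨m, hm⟩ := Nat.exists_eq_succ_of_ne_zero hn
    obtain ⟨s, hs⟩ := hker (u.coeff (m + 1)) <| by
      simpa [coeff_eq_zero_of_natDegree_lt, hm] using hcoeff (m + 1)
    have hs0 : s = 0 := by
      have h := hℓ (-u.coeff m) ((m + 1) * s) <| by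
        rw [map_neg, eq_neg_of_add_eq_zero_left (hcoeff m), ← hs, map_mul, mul_assoc,
          nsmul_eq_mul]
        simp
      simpa [Nat.cast_add_one_ne_zero] using h
    have hlead : u.leadingCoeff = 0 := by rw [leadingCoeff, hm, ← hs, hs0, map_zero]
    exact hn (by rw [leadingCoeff_eq_zero.mp hlead, natDegree_zero])
  obtain ⟨s, hs⟩ := hker (u.coeff 0) <| by
    simpa [coeff_eq_zero_of_natDegree_lt, hdeg] using hcoeff 0
  exact ⟨s, by rw [eq_C_of_natDegree_eq_zero hdeg, ← hs, Polynomial.algebraMap_apply]⟩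

theorem polynomial_surjective (hDC : ∀ a, D (C a) = C (d a)) (hDX : D X = C ℓ)
    (hconst : ∀ r : k, d (algebraMap k R r) = 0)
    (hdecomp : ∀ a, ∃ g, ∃ r : k, d g + algebraMap k R r * ℓ = a) : Function.Surjective D := by
  suffices hrange : ∀ u, u ∈ (D : R[X] →+ R[X]).range from fun u ↦ hrange u
  have hmonomial (n : ℕ) : ∀ a, C a * X ^ n ∈ (D : R[X] →+ R[X]).range := by
    induction n using Nat.strong_induction_on with | _ n ih => ?_
    intro a
    obtain ⟨g, r, rfl⟩ := hdecomp a
    have hexact : C (d g) * X ^ n ∈ (D : R[X] →+ R[X]).range := by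
      rw [← add_sub_cancel_right (C (d g) * X ^ n) (n • (C (g * ℓ) * X ^ (n - 1))),
        ← polynomial_apply_C_mul_X_pow hDC hDX]
      refine sub_mem ⟨_, rfl⟩ ?_
      rcases n with _ | m
      · rw [zero_smul]; exact zero_mem _
      · exact nsmul_mem (ih m m.lt_succ_self _) _
    have hlog : C (algebraMap k R r * ℓ) * X ^ n ∈ (D : R[X] →+ R[X]).range := by
      refine ⟨C (algebraMap k R ((n + 1 : k)⁻¹ * r)) * X ^ (n + 1), ?_⟩
      rw [AddMonoidHom.coe_coe, polynomial_apply_C_mul_X_pow hDC hDX, hconst, map_zero,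
        zero_mul, zero_add, Nat.add_sub_cancel, ← smul_mul_assoc, ← map_nsmul, ← smul_mul_assoc,
        ← map_nsmul, nsmul_eq_mul, Nat.cast_succ,
        mul_inv_cancel_left₀ (Nat.cast_add_one_ne_zero n)]
    rw [map_add, add_mul]
    exact add_mem hexact hlog
  intro u
  induction u using Polynomial.induction_on' with
  | add p q hp hq => exact add_mem hp hq
  | monomial n a => exact C_mul_X_pow_eq_monomial (R := R) ▸ hmonomial n a

end Derivation

namespace LaurentSeries

open HahnSeries

variable {k : Type*} [Field k]

theorem coeff_hasseDeriv_one (f : LaurentSeries k) (n : ℤ) :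
    (hasseDeriv k 1 f).coeff n = (n + 1) • f.coeff (n + 1) := by
  rw [hasseDeriv_coeff, Nat.cast_one, Ring.choose_one_right]

theorem coeff_hasseDeriv_one_neg_one (f : LaurentSeries k) :
    (hasseDeriv k 1 f).coeff (-1) = 0 := by
  rw [coeff_hasseDeriv_one, neg_add_cancel, zero_smul]

theorem algebraMap_mul_single_neg_one (r : k) :
    algebraMap k (LaurentSeries k) r * single (-1) 1 = single (-1) r := by
  rw [algebraMap_apply, C_apply, single_mul_single, zero_add, mul_one]

theorem eq_zero_of_hasseDeriv_one_eq_algebraMap_mul_single_neg_one {g : LaurentSeries k} {r : k}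
    (hg : hasseDeriv k 1 g = algebraMap k (LaurentSeries k) r * single (-1) 1) : r = 0 := by
  simpa [algebraMap_mul_single_neg_one, coeff_hasseDeriv_one_neg_one] using
    (congrArg (coeff · (-1)) hg).symm

theorem hasseDeriv_one_algebraMap (r : k) :
    hasseDeriv k 1 (algebraMap k (LaurentSeries k) r) = 0 := by
  ext n
  rw [coeff_hasseDeriv_one, algebraMap_apply, C_apply, coeff_single, HahnSeries.coeff_zero]
  split_ifs with hn
  · rw [hn, zero_smul]
  · rw [smul_zero]

noncomputable def primitive (f : LaurentSeries k) : LaurentSeries k :=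
  ofSuppBddBelow (fun n ↦ f.coeff (n - 1) / n) ⟨f.order + 1, fun n hn ↦ by
    by_contra! hlt
    exact hn (show f.coeff (n - 1) / n = 0 by
      rw [coeff_eq_zero_of_lt_order (by omega), zero_div])⟩

theorem coeff_primitive (f : LaurentSeries k) (n : ℤ) :
    (primitive f).coeff n = f.coeff (n - 1) / n := rfl

variable [CharZero k]

theorem algebraMap_coeff_zero_of_hasseDeriv_one_eq_zero {f : LaurentSeries k}
    (hf : hasseDeriv k 1 f = 0) : algebraMap k (LaurentSeries k) (f.coeff 0) = f := by
  ext n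
  rw [algebraMap_apply, C_apply, coeff_single]
  rcases eq_or_ne n 0 with rfl | hn
  · rw [if_pos rfl]
  · have h := coeff_hasseDeriv_one f (n - 1)
    rw [hf, sub_add_cancel, HahnSeries.coeff_zero, eq_comm, smul_eq_zero] at h
    rw [if_neg hn, h.resolve_left hn]

theorem hasseDeriv_one_primitive {f : LaurentSeries k} (hf : f.coeff (-1) = 0) :
    hasseDeriv k 1 (primitive f) = f := by
  ext n
  rw [coeff_hasseDeriv_one, coeff_primitive, add_sub_cancel_right]
  rcases eq_or_ne (n + 1) 0 with hn | hn
  · rw [hn, zero_smul, ← hf, eq_neg_of_add_eq_zero_left hn]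
  · rw [zsmul_eq_mul, mul_div_cancel₀ _ (Int.cast_ne_zero.mpr hn)]

theorem exists_hasseDeriv_one_add_algebraMap_mul_single_neg_one (f : LaurentSeries k) :
    ∃ g, ∃ r : k, hasseDeriv k 1 g + algebraMap k (LaurentSeries k) r * single (-1) 1 = f := by
  refine ⟨primitive (f - single (-1) (f.coeff (-1))), f.coeff (-1), ?_⟩
  rw [hasseDeriv_one_primitive (by simp), algebraMap_mul_single_neg_one, sub_add_cancel]

end LaurentSeries

/-- In the algebra `U{ε} = k[[ε]][ε⁻¹][L]` of logarithmic Laurent series (with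
`∂L = ε⁻¹`), the kernel of `∂` is `k` and every element has a primitive:
`H⁰(U{ε}) = k` and `H¹(U{ε}) = 0`. Here `U{ε}` is modelled as the polynomial
ring in the formal logarithm `X = L_ε` over the field of formal Laurent
series, and `∂` is any derivation acting coefficientwise as `d/dε` and sending
`L_ε` to `ε⁻¹`. -/
theorem logarithmic_laurent_series_cohomology {k : Type*} [Field k] [CharZero k]
    (D₀ : Derivation k (LaurentSeries k) (LaurentSeries k))
    (hD₀ : ∀ (f : LaurentSeries k) (n : ℤ), (D₀ f).coeff n = (n + 1) • f.coeff (n + 1))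
    (D : Derivation k (Polynomial (LaurentSeries k)) (Polynomial (LaurentSeries k)))
    (hDC : ∀ f, D (Polynomial.C f) = Polynomial.C (D₀ f))
    (hDX : D Polynomial.X = Polynomial.C (HahnSeries.single (-1 : ℤ) (1 : k))) :
    (∀ u, D u = 0 → ∃ c : k, algebraMap k (Polynomial (LaurentSeries k)) c = u) ∧
    (∀ u, ∃ v, D v = u) := by
  have hDC' (f : LaurentSeries k) :
      D (Polynomial.C f) = Polynomial.C ((LaurentSeries.hasseDeriv k 1).toAddMonoidHom f) := by
    rw [hDC]
    congr 1
    ext n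
    rw [hD₀, LinearMap.toAddMonoidHom_coe, LaurentSeries.coeff_hasseDeriv_one]
  constructor
  · exact fun u hu ↦ Derivation.polynomial_exists_algebraMap_eq_of_apply_eq_zero hDC' hDX
      (fun f hf ↦ ⟨f.coeff 0, LaurentSeries.algebraMap_coeff_zero_of_hasseDeriv_one_eq_zero hf⟩)
      (fun _ _ ↦ LaurentSeries.eq_zero_of_hasseDeriv_one_eq_algebraMap_mul_single_neg_one) hu
  · exact Derivation.polynomial_surjective hDC' hDX LaurentSeries.hasseDeriv_one_algebraMap
      LaurentSeries.exists_hasseDeriv_one_add_algebraMap_mul_single_neg_one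
end
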